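/- arXiv:2310.00750 — 5 statements merged into one kernel-verified Lean document; each statement's English description precedes it below -/
import Mathlib

section
/- For any δ ∈ (0,1), the binary Kullback-Leibler divergence satisfies kl(δ, 1−δ) ≥ ln(1/(2.4·δ)). -/
set_option maxHeartbeats 1000000

/-- Bernoulli KL divergence. -/
noncomputable def klBin (p q : ℝ) : ℝ :=
  p * Real.log (p / q) + (1 - p) * Real.log ((1 - p) / (1 - q))

lemma tangent_aux (a x : ℝ) (ha : 0 < a) (hx : 0 < x) :
    x * (Real.log a + 1) - a ≤ x * Real.log x := by
  have h := Real.log_le_sub_one_of_pos (div_pos ha hx)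
  rw [Real.log_div ha.ne' hx.ne'] at h
  have h2 := mul_le_mul_of_nonneg_left h hx.le
  have h3 : x * (a / x - 1) = a - x := by field_simp
  nlinarith [h2, h3]

lemma log34_bounds : -0.2876867 ≤ Real.log (3/4) ∧ Real.log (3/4) ≤ -0.2876764 := by
  have h := Real.abs_log_sub_add_sum_range_le (x := (1/4 : ℝ)) (by rw [abs_of_nonneg] <;> norm_num) 8
  rw [abs_le, abs_of_nonneg (by norm_num : (0:ℝ) ≤ 1/4)] at h
  norm_num [Finset.sum_range_succ] at h
  constructor <;> linarith [h.1, h.2]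

lemma log54_ub : Real.log (5/4) ≤ 0.2231484 := by
  have h := Real.abs_log_sub_add_sum_range_le (x := (-(1/4) : ℝ)) (by rw [abs_of_nonpos] <;> norm_num) 8
  rw [abs_le, abs_of_nonpos (by norm_num : (-(1/4):ℝ) ≤ 0)] at h
  norm_num [Finset.sum_range_succ] at h
  linarith [h.1, h.2]

lemma key_ineq (δ : ℝ) (h0 : 0 < δ) (h1 : δ < 1) :
    0 ≤ (1 - 2*δ) * Real.log (1 - δ) + 2*δ * Real.log δ + Real.log (12/5) := by
  have h1δ : 0 < 1 - δ := by linarith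
  have e23 : Real.log ((2:ℝ)/3) = -Real.log 2 - Real.log (3/4) := by
    rw [Real.log_div (by norm_num) (by norm_num), Real.log_div (by norm_num) (by norm_num),
      show (4:ℝ) = 2^2 by norm_num, Real.log_pow]
    push_cast; ring
  have e13 : Real.log ((1:ℝ)/3) = -2*Real.log 2 - Real.log (3/4) := by
    rw [Real.log_div (by norm_num) (by norm_num), Real.log_div (by norm_num) (by norm_num),
      show (4:ℝ) = 2^2 by norm_num, Real.log_pow]
    push_cast; simp; ring
  have e125 : Real.log ((12:ℝ)/5) = 2*Real.log 2 + Real.log (3/4) - Real.log (5/4) := by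
    rw [Real.log_div (by norm_num) (by norm_num), Real.log_div (by norm_num) (by norm_num),
      Real.log_div (by norm_num) (by norm_num), show (12:ℝ) = 2^2*3 by norm_num,
      Real.log_mul (by norm_num) (by norm_num), Real.log_pow, show (4:ℝ) = 2^2 by norm_num,
      Real.log_pow]
    push_cast; ring
  have l2lb := Real.log_two_gt_d9
  have l2ub := Real.log_two_lt_d9
  obtain ⟨l34lb, l34ub⟩ := log34_bounds
  have l54 := log54_ub
  have hA : Real.log ((2:ℝ)/3) ≥ -0.4055 := by rw [e23]; linarith
  have hB : Real.log ((1:ℝ)/3) ≥ -1.0987 := by rw [e13]; linarith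
  have hC : Real.log ((12:ℝ)/5) ≥ 0.8754 := by rw [e125]; linarith
  rcases le_or_gt δ (1/2) with hle | hgt
  · have t1 := tangent_aux (2/3) (1-δ) (by norm_num) h1δ
    have t2 := tangent_aux (1/3) δ (by norm_num) h0
    have p1 : 0 ≤ (1 - 2*δ) * ((1-δ) * Real.log (1-δ) - ((1-δ) * (Real.log ((2:ℝ)/3) + 1) - 2/3)) :=
      mul_nonneg (by linarith) (by linarith)
    have p2 : 0 ≤ (2*(1-δ)) * (δ * Real.log δ - (δ * (Real.log ((1:ℝ)/3) + 1) - 1/3)) :=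
      mul_nonneg (by linarith) (by linarith)
    have p3 : 0 ≤ (1 - 2*δ) * (1-δ) * (Real.log ((2:ℝ)/3) + 0.4055) :=
      mul_nonneg (mul_nonneg (by linarith) h1δ.le) (by linarith)
    have p4 : 0 ≤ 2*δ * (1-δ) * (Real.log ((1:ℝ)/3) + 1.0987) :=
      mul_nonneg (mul_nonneg (by linarith) h1δ.le) (by linarith)
    have p5 : 0 ≤ (1-δ) * (Real.log ((12:ℝ)/5) - 0.8754) :=
      mul_nonneg h1δ.le (by linarith)
    have hq : 0 ≤ 0.5945*(1-2*δ)*(1-δ) - (2/3)*(1-2*δ) - 0.1974*δ*(1-δ) - (2/3)*(1-δ)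
        + 0.8754*(1-δ) := by
      nlinarith [sq_nonneg (δ - 309/1000)]
    have hQ : 0 ≤ (1-δ) * ((1 - 2*δ) * Real.log (1 - δ) + 2*δ * Real.log δ
        + Real.log ((12:ℝ)/5)) := by linarith [p1, p2, p3, p4, p5, hq]
    exact (mul_nonneg_iff_of_pos_left h1δ).mp hQ
  · have hu : Real.log (1-δ) ≤ -δ := by
      have := Real.log_le_sub_one_of_pos h1δ; linarith
    have t2 := tangent_aux (1/2) δ (by norm_num) h0
    have e12 : Real.log ((1:ℝ)/2) = -Real.log 2 := by
      rw [Real.log_div (by norm_num) (by norm_num)]; simp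
    rw [e12] at t2
    have p1 : 0 ≤ (2*δ - 1) * (-δ - Real.log (1-δ)) :=
      mul_nonneg (by linarith) (by linarith)
    have p3 : 0 ≤ (2*δ) * (0.6931471808 - Real.log 2) :=
      mul_nonneg (by linarith) (by linarith)
    nlinarith [p1, t2, p3, hC, sq_nonneg (δ - 1/2)]

theorem kl_delta_one_sub_delta_ge (δ : ℝ) (hδ : δ ∈ Set.Ioo (0:ℝ) 1) :
    klBin δ (1 - δ) ≥ Real.log (1 / (2.4 * δ)) := by
  obtain ⟨h0, h1⟩ := hδ
  have h1δ : 0 < 1 - δ := by linarith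
  have key := key_ineq δ h0 h1
  unfold klBin
  rw [show (1:ℝ) - (1 - δ) = δ by ring]
  rw [Real.log_div h0.ne' h1δ.ne', Real.log_div h1δ.ne' h0.ne', one_div, Real.log_inv,
    Real.log_mul (by norm_num) h0.ne', show (2.4:ℝ) = 12/5 by norm_num]
  nlinarith [key]
end

section
/- Let n ≥ 2 and consider a dueling bandits instance with indifferences having a unique mode for every pair of distinct arms, unique Copeland winner i*, and let j ≠ i*. With d_j = CP(i*) − CP(j), L(j) the set of arms strictly dominating j, and I(j) the set of arms indifferent to j: (i) if i* ∉ L(j) ∪ I(j) then |I(j)| + 2|L(j)| ≥ 2·d_j + 1; (ii) if i* ∈ I(j) then (|I(j)|−1) + 2|L(j)| ≥ 2·d_j − 1; (iii) if i* ∈ L(j) then |I(j)| + 2(|L(j)|−1) ≥ 2·d_j − 3. -/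
open Finset

noncomputable def Dset {n : ℕ} (Ps Pi Pp : Fin n → Fin n → ℝ) (p : Fin n) : Finset (Fin n) :=
  univ.filter (fun k => k ≠ p ∧ Ps p k > max (Pp p k) (Pi p k))

noncomputable def Iset {n : ℕ} (Ps Pi Pp : Fin n → Fin n → ℝ) (p : Fin n) : Finset (Fin n) :=
  univ.filter (fun k => k ≠ p ∧ Pi p k > max (Ps p k) (Pp p k))

noncomputable def Lset {n : ℕ} (Ps Pi Pp : Fin n → Fin n → ℝ) (p : Fin n) : Finset (Fin n) :=
  univ.filter (fun k => k ≠ p ∧ Pp p k > max (Ps p k) (Pi p k))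

lemma part_card {n : ℕ} (Ps Pi Pp : Fin n → Fin n → ℝ)
    (hmode : ∀ i j : Fin n, i ≠ j →
      (Ps i j > max (Pp i j) (Pi i j)) ∨ (Pi i j > max (Ps i j) (Pp i j)) ∨
        (Pp i j > max (Ps i j) (Pi i j)))
    (p : Fin n) :
    (Dset Ps Pi Pp p).card + (Iset Ps Pi Pp p).card + (Lset Ps Pi Pp p).card + 1 = n := by
  have hd1 : Disjoint (Dset Ps Pi Pp p) (Iset Ps Pi Pp p) := by
    simp only [Finset.disjoint_left, Dset, Iset, mem_filter, mem_univ, true_and, not_and]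
    rintro k ⟨hk, h1⟩ hk2
    intro h2
    have a1 := le_max_right (Pp p k) (Pi p k)
    have a2 := le_max_left (Ps p k) (Pp p k)
    linarith
  have hd2 : Disjoint (Dset Ps Pi Pp p ∪ Iset Ps Pi Pp p) (Lset Ps Pi Pp p) := by
    simp only [Finset.disjoint_left, Dset, Iset, Lset, mem_union, mem_filter, mem_univ,
      true_and, not_and]
    rintro k (⟨hk, h1⟩ | ⟨hk, h1⟩) hk2 h2
    · have a1 := le_max_left (Pp p k) (Pi p k)
      have a2 := le_max_left (Ps p k) (Pi p k)
      linarith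
    · have a1 := le_max_right (Ps p k) (Pp p k)
      have a2 := le_max_right (Ps p k) (Pi p k)
      linarith
  have hu : Dset Ps Pi Pp p ∪ Iset Ps Pi Pp p ∪ Lset Ps Pi Pp p = univ.filter (fun k => k ≠ p) := by
    ext k
    simp only [Dset, Iset, Lset, mem_union, mem_filter, mem_univ, true_and]
    constructor
    · rintro ((⟨hk, _⟩ | ⟨hk, _⟩) | ⟨hk, _⟩) <;> exact hk
    · intro hk
      rcases hmode p k (Ne.symm hk) with h | h | h
      · exact Or.inl (Or.inl ⟨hk, h⟩)
      · exact Or.inl (Or.inr ⟨hk, h⟩)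
      · exact Or.inr ⟨hk, h⟩
  have hcard : (Dset Ps Pi Pp p ∪ Iset Ps Pi Pp p ∪ Lset Ps Pi Pp p).card = n - 1 := by
    rw [hu]
    rw [Finset.filter_ne', Finset.card_erase_of_mem (mem_univ p), card_univ, Fintype.card_fin]
  rw [card_union_of_disjoint hd2, card_union_of_disjoint hd1] at hcard
  have hp : 1 ≤ n := Fin.pos p
  omega

open Finset in
theorem psi_sets_nonempty {n : ℕ} (hn : 2 ≤ n)
    (Ps Pi Pp : Fin n → Fin n → ℝ)
    (hrange : ∀ i j, 0 ≤ Ps i j ∧ 0 ≤ Pi i j ∧ 0 ≤ Pp i j)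
    (hsum : ∀ i j, i ≠ j → Ps i j + Pi i j + Pp i j = 1)
    (hcons1 : ∀ i j, i ≠ j → Ps j i = Pp i j)
    (hcons2 : ∀ i j, i ≠ j → Pi j i = Pi i j)
    (hmode : ∀ i j, i ≠ j →
      (Ps i j > max (Pp i j) (Pi i j)) ∨ (Pi i j > max (Ps i j) (Pp i j)) ∨
        (Pp i j > max (Ps i j) (Pi i j)))
    (CP : Fin n → ℝ)
    (hCP : ∀ i, CP i
      = ((univ.filter (fun k => k ≠ i ∧ Ps i k > max (Pp i k) (Pi i k))).card : ℝ)
        + (1 / 2) * ((univ.filter (fun k => k ≠ i ∧ Pi i k > max (Ps i k) (Pp i k))).card : ℝ))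
    (istar : Fin n) (hwin : ∀ j, j ≠ istar → CP j < CP istar)
    (j : Fin n) (hj : j ≠ istar)
    (L I : Finset (Fin n))
    (hL : L = univ.filter (fun i => i ≠ j ∧ Ps i j > max (Pp i j) (Pi i j)))
    (hI : I = univ.filter (fun i => i ≠ j ∧ Pi i j > max (Ps i j) (Pp i j))) :
    (istar ∉ L ∪ I → (I.card : ℝ) + 2 * L.card ≥ 2 * (CP istar - CP j) + 1) ∧
    (istar ∈ I → ((I.card : ℝ) - 1) + 2 * L.card ≥ 2 * (CP istar - CP j) - 1) ∧
    (istar ∈ L → (I.card : ℝ) + 2 * ((L.card : ℝ) - 1) ≥ 2 * (CP istar - CP j) - 3) := by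
  classical
  -- identify L and I with Lset/Iset at j
  have hLeq : L = Lset Ps Pi Pp j := by
    rw [hL]
    ext k
    simp only [Lset, mem_filter, mem_univ, true_and]
    refine and_congr_right fun hk => ?_
    rw [hcons1 j k (Ne.symm hk), ← hcons1 k j hk, hcons2 j k (Ne.symm hk)]
  have hIeq : I = Iset Ps Pi Pp j := by
    rw [hI]
    ext k
    simp only [Iset, mem_filter, mem_univ, true_and]
    refine and_congr_right fun hk => ?_
    rw [hcons2 j k (Ne.symm hk), hcons1 j k (Ne.symm hk), ← hcons1 k j hk,
      max_comm (Pp j k) (Ps j k)]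
  -- CP formulas
  have hCPj : CP j = ((Dset Ps Pi Pp j).card : ℝ) + (1/2) * ((Iset Ps Pi Pp j).card : ℝ) :=
    hCP j
  have hCPs : CP istar
      = ((Dset Ps Pi Pp istar).card : ℝ) + (1/2) * ((Iset Ps Pi Pp istar).card : ℝ) :=
    hCP istar
  -- partition counts (in ℝ)
  have hpj := part_card Ps Pi Pp hmode j
  have hps := part_card Ps Pi Pp hmode istar
  have hpjR : ((Dset Ps Pi Pp j).card : ℝ) + ((Iset Ps Pi Pp j).card : ℝ)
      + ((Lset Ps Pi Pp j).card : ℝ) + 1 = n := by exact_mod_cast congrArg (Nat.cast : ℕ → ℝ) hpj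
  have hpsR : ((Dset Ps Pi Pp istar).card : ℝ) + ((Iset Ps Pi Pp istar).card : ℝ)
      + ((Lset Ps Pi Pp istar).card : ℝ) + 1 = n := by
    exact_mod_cast congrArg (Nat.cast : ℕ → ℝ) hps
  have hnn1 : (0:ℝ) ≤ ((Iset Ps Pi Pp istar).card : ℝ) := Nat.cast_nonneg _
  have hnn2 : (0:ℝ) ≤ ((Lset Ps Pi Pp istar).card : ℝ) := Nat.cast_nonneg _
  have hLcard : (L.card : ℝ) = ((Lset Ps Pi Pp j).card : ℝ) := by rw [hLeq]
  have hIcard : (I.card : ℝ) = ((Iset Ps Pi Pp j).card : ℝ) := by rw [hIeq]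
  refine ⟨?_, ?_, ?_⟩
  · intro h
    have hjL : j ∈ Lset Ps Pi Pp istar := by
      rcases hmode istar j (Ne.symm hj) with hm | hm | hm
      · exact absurd (mem_union_left _
          (by rw [hL]; exact mem_filter.mpr ⟨mem_univ _, Ne.symm hj, hm⟩)) h
      · exact absurd (mem_union_right _
          (by rw [hI]; exact mem_filter.mpr ⟨mem_univ _, Ne.symm hj, hm⟩)) h
      · exact mem_filter.mpr ⟨mem_univ _, hj, hm⟩
    have h1 : (1:ℝ) ≤ ((Lset Ps Pi Pp istar).card : ℝ) := by
      exact_mod_cast Finset.one_le_card.mpr ⟨j, hjL⟩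
    linarith
  · intro h
    have hjI : j ∈ Iset Ps Pi Pp istar := by
      rw [hI] at h
      exact mem_filter.mpr ⟨mem_univ _, hj, (mem_filter.mp h).2.2⟩
    have h1 : (1:ℝ) ≤ ((Iset Ps Pi Pp istar).card : ℝ) := by
      exact_mod_cast Finset.one_le_card.mpr ⟨j, hjI⟩
    linarith
  · intro _
    linarith
end

section
/- Let n ≥ 2 and consider a dueling bandits instance with indifferences with a unique mode for every pair. Modify it at positions (j,z) for z in a set S ⊆ A\{j} by flipping the mode of each such pair to the category 'j ≻ z' (and leaving all other pairs unchanged). Then the Copeland score of j in the modified instance equals CP(j) + |S ∩ I(j)|/2 + |S ∩ L(j)|, where I(j) and L(j) are the indifferent and superior sets of j in the original instance, provided S ⊆ I(j) ∪ L(j). -/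
open Finset in
theorem copeland_score_after_flip {n : ℕ} (hn : 2 ≤ n)
    (Ps Pi Pp : Fin n → Fin n → ℝ)
    (hrange : ∀ i j, 0 ≤ Ps i j ∧ 0 ≤ Pi i j ∧ 0 ≤ Pp i j)
    (hsum : ∀ i j, i ≠ j → Ps i j + Pi i j + Pp i j = 1)
    (hmode : ∀ i j, i ≠ j →
      (Ps i j > max (Pp i j) (Pi i j)) ∨ (Pi i j > max (Ps i j) (Pp i j)) ∨
        (Pp i j > max (Ps i j) (Pi i j)))
    (j : Fin n)
    (L I : Finset (Fin n))
    (hL : L = univ.filter (fun i => i ≠ j ∧ Pp j i > max (Ps j i) (Pi j i)))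
    (hI : I = univ.filter (fun i => i ≠ j ∧ Pi j i > max (Ps j i) (Pp j i)))
    (S : Finset (Fin n)) (hS : S ⊆ L ∪ I)
    -- modified row of arm j
    (Qs Qi Qp : Fin n → ℝ)
    (hflipI : ∀ z ∈ S ∩ I, Qs z = Pi j z ∧ Qi z = Ps j z ∧ Qp z = Pp j z)
    (hflipL : ∀ z ∈ S ∩ L, Qs z = Pp j z ∧ Qi z = Pi j z ∧ Qp z = Ps j z)
    (hkeep : ∀ z, z ∉ S → Qs z = Ps j z ∧ Qi z = Pi j z ∧ Qp z = Pp j z) :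
    ((univ.filter (fun k => k ≠ j ∧ Qs k > max (Qp k) (Qi k))).card : ℝ)
      + (1 / 2) * ((univ.filter (fun k => k ≠ j ∧ Qi k > max (Qs k) (Qp k))).card : ℝ)
      = (((univ.filter (fun k => k ≠ j ∧ Ps j k > max (Pp j k) (Pi j k))).card : ℝ)
          + (1 / 2) * ((univ.filter (fun k => k ≠ j ∧ Pi j k > max (Ps j k) (Pp j k))).card : ℝ))
        + ((S ∩ I).card : ℝ) / 2 + ((S ∩ L).card : ℝ) := by
  classical
  set W := univ.filter (fun k => k ≠ j ∧ Ps j k > max (Pp j k) (Pi j k)) with hW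
  have memW : ∀ k, k ∈ W ↔ k ≠ j ∧ Ps j k > max (Pp j k) (Pi j k) := by
    intro k; simp [hW]
  have memI : ∀ k, k ∈ I ↔ k ≠ j ∧ Pi j k > max (Ps j k) (Pp j k) := by
    intro k; simp [hI]
  have memL : ∀ k, k ∈ L ↔ k ≠ j ∧ Pp j k > max (Ps j k) (Pi j k) := by
    intro k; simp [hL]
  have hQW : univ.filter (fun k => k ≠ j ∧ Qs k > max (Qp k) (Qi k))
      = W ∪ (S ∩ I) ∪ (S ∩ L) := by
    ext k
    simp only [mem_filter, mem_univ, true_and, mem_union, mem_inter]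
    by_cases hk : k ∈ S
    · have hk' : k ∈ L ∨ k ∈ I := by
        have := hS hk; simpa [mem_union] using this
      rcases hk' with hkL | hkI
      · obtain ⟨q1, q2, q3⟩ := hflipL k (by simp [hk, hkL])
        have h := (memL k).mp hkL
        constructor
        · intro _; exact Or.inr ⟨hk, hkL⟩
        · intro _
          refine ⟨h.1, ?_⟩
          rw [q1, q2, q3]
          simpa [max_lt_iff] using h.2
      · obtain ⟨q1, q2, q3⟩ := hflipI k (by simp [hk, hkI])
        have h := (memI k).mp hkI
        constructor
        · intro _; exact Or.inl (Or.inr ⟨hk, hkI⟩)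
        · intro _
          refine ⟨h.1, ?_⟩
          rw [q1, q2, q3]
          simpa [max_lt_iff, and_comm] using (max_lt_iff.mp h.2)
    · obtain ⟨q1, q2, q3⟩ := hkeep k hk
      rw [q1, q2, q3]
      constructor
      · intro h; exact Or.inl (Or.inl ((memW k).mpr h))
      · rintro ((h | ⟨h, -⟩) | ⟨h, -⟩)
        · exact (memW k).mp h
        · exact absurd h hk
        · exact absurd h hk
  have hQI : univ.filter (fun k => k ≠ j ∧ Qi k > max (Qs k) (Qp k)) = I \ S := by
    ext k
    simp only [mem_filter, mem_univ, true_and, mem_sdiff]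
    by_cases hk : k ∈ S
    · have hk' : k ∈ L ∨ k ∈ I := by
        have := hS hk; simpa [mem_union] using this
      simp only [hk, not_true, and_false, iff_false]
      rcases hk' with hkL | hkI
      · obtain ⟨q1, q2, q3⟩ := hflipL k (by simp [hk, hkL])
        have h := (memL k).mp hkL
        rintro ⟨-, hgt⟩
        rw [q1, q2, q3] at hgt
        have := max_lt_iff.mp h.2
        have := max_lt_iff.mp hgt
        simp only [lt_max_iff, max_lt_iff] at *
        linarith [this.1]
      · obtain ⟨q1, q2, q3⟩ := hflipI k (by simp [hk, hkI])
        have h := (memI k).mp hkI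
        rintro ⟨-, hgt⟩
        rw [q1, q2, q3] at hgt
        have h1 := max_lt_iff.mp h.2
        have h2 := max_lt_iff.mp hgt
        linarith [h1.1, h2.1]
    · obtain ⟨q1, q2, q3⟩ := hkeep k hk
      rw [q1, q2, q3]
      rw [memI k]
      tauto
  have dIL : Disjoint I L := by
    rw [Finset.disjoint_left]
    intro a haI haL
    have h1 := max_lt_iff.mp ((memI a).mp haI).2
    have h2 := max_lt_iff.mp ((memL a).mp haL).2
    linarith [h1.2, h2.2]
  have dWI : Disjoint W I := by
    rw [Finset.disjoint_left]
    intro a haW haI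
    have h1 := max_lt_iff.mp ((memW a).mp haW).2
    have h2 := max_lt_iff.mp ((memI a).mp haI).2
    linarith [h1.2, h2.1]
  have dWL : Disjoint W L := by
    rw [Finset.disjoint_left]
    intro a haW haL
    have h1 := max_lt_iff.mp ((memW a).mp haW).2
    have h2 := max_lt_iff.mp ((memL a).mp haL).2
    linarith [h1.1, h2.1]
  have d1 : Disjoint W (S ∩ I) := dWI.mono_right (inter_subset_right)
  have d2 : Disjoint (W ∪ S ∩ I) (S ∩ L) := by
    refine Finset.disjoint_union_left.mpr ⟨dWL.mono_right inter_subset_right, ?_⟩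
    exact dIL.mono inter_subset_right inter_subset_right
  have hcard1 : (W ∪ S ∩ I ∪ S ∩ L).card = W.card + (S ∩ I).card + (S ∩ L).card := by
    rw [card_union_of_disjoint d2, card_union_of_disjoint d1]
  have hIS : I \ S = I \ (S ∩ I) := by
    ext a; simp only [mem_sdiff, mem_inter]; tauto
  have hsub : S ∩ I ⊆ I := inter_subset_right
  have hcard2 : (I \ S).card = I.card - (S ∩ I).card := by
    rw [hIS, card_sdiff_of_subset hsub]
  have hle : (S ∩ I).card ≤ I.card := card_le_card hsub
  rw [hQW, hQI, hcard1, hcard2, ← hI]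
  push_cast [Nat.cast_sub hle]
  ring
end

section
/- Let n ≥ 2 and consider a dueling bandits instance with indifferences that is transitive (satisfying transitivity of strict preference, IP-transitivity, PI-transitivity, and transitivity of indifference) with a unique mode for every pair. Define the relation i ≽ j iff i strictly dominates j or i is indifferent to j. Then ≽ (together with equality) induces a total preorder on the arms, and every maximal element of this preorder is a Copeland winner. -/
/-!
Reading the probabilities in both orders shows that strict dominance is asymmetric, indifference
is symmetric, the two exclude each other, and, by the unique mode, any two distinct arms are
related by one of them. The four transitivity conditions then make `i = j ∨ i ≻ j ∨ i ≅ j` a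
total preorder. If `i ≻ j`, then `i` dominates `j` and everything `j` dominates or is
indifferent to, so its dominance count alone exceeds `j`'s score; if `i ≅ j`, then `i` dominates
everything `j` dominates, and the indifference classes of `i` and `j` coincide. So the Copeland
score is monotone along the preorder, and a maximal element maximizes it.
-/

open Classical Finset

namespace DuelingBandits

section Probabilities

variable {α : Type*} {Ps Pi Pp : α → α → ℝ} {dom ind : α → α → Prop}

theorem not_ind_of_dom (hdom : ∀ i j, dom i j ↔ i ≠ j ∧ Ps i j > max (Pp i j) (Pi i j))
    (hind : ∀ i j, ind i j ↔ i ≠ j ∧ Pi i j > max (Ps i j) (Pp i j)) {i j : α}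
    (h : dom i j) : ¬ ind i j := by
  intro h'
  have hd := ((hdom i j).mp h).2
  have hi := ((hind i j).mp h').2
  simp only [gt_iff_lt, max_lt_iff] at hd hi
  linarith [hd.2, hi.1]

theorem dom_asymm (hcons1 : ∀ i j, i ≠ j → Ps j i = Pp i j)
    (hdom : ∀ i j, dom i j ↔ i ≠ j ∧ Ps i j > max (Pp i j) (Pi i j)) {i j : α}
    (h : dom i j) : ¬ dom j i := by
  intro h'
  obtain ⟨hne, hd⟩ := (hdom i j).mp h
  have hd' := ((hdom j i).mp h').2
  rw [hcons1 i j hne, ← hcons1 j i hne.symm] at hd'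
  simp only [gt_iff_lt, max_lt_iff] at hd hd'
  linarith [hd.1, hd'.1]

theorem ind_symm (hcons1 : ∀ i j, i ≠ j → Ps j i = Pp i j)
    (hcons2 : ∀ i j, i ≠ j → Pi j i = Pi i j)
    (hind : ∀ i j, ind i j ↔ i ≠ j ∧ Pi i j > max (Ps i j) (Pp i j)) {i j : α}
    (h : ind i j) : ind j i := by
  obtain ⟨hne, hi⟩ := (hind i j).mp h
  refine (hind j i).mpr ⟨hne.symm, ?_⟩
  rwa [hcons2 i j hne, hcons1 i j hne, ← hcons1 j i hne.symm, max_comm]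

theorem dom_or_dom_or_ind (hcons1 : ∀ i j, i ≠ j → Ps j i = Pp i j)
    (hcons2 : ∀ i j, i ≠ j → Pi j i = Pi i j)
    (hmode : ∀ i j, i ≠ j →
      (Ps i j > max (Pp i j) (Pi i j)) ∨ (Pi i j > max (Ps i j) (Pp i j)) ∨
        (Pp i j > max (Ps i j) (Pi i j)))
    (hdom : ∀ i j, dom i j ↔ i ≠ j ∧ Ps i j > max (Pp i j) (Pi i j))
    (hind : ∀ i j, ind i j ↔ i ≠ j ∧ Pi i j > max (Ps i j) (Pp i j)) {i j : α}
    (hne : i ≠ j) : dom i j ∨ dom j i ∨ ind i j := by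
  rcases hmode i j hne with h | h | h
  · exact Or.inl ((hdom i j).mpr ⟨hne, h⟩)
  · exact Or.inr (Or.inr ((hind i j).mpr ⟨hne, h⟩))
  · refine Or.inr (Or.inl ((hdom j i).mpr ⟨hne.symm, ?_⟩))
    rwa [hcons1 i j hne, ← hcons1 j i hne.symm, hcons2 i j hne]

end Probabilities

section Relations

variable {α : Type*} {dom ind : α → α → Prop}

def WeakPref (dom ind : α → α → Prop) (i j : α) : Prop :=
  i = j ∨ dom i j ∨ ind i j

theorem weakPref_trans (hDD : ∀ i j k, dom i j → dom j k → i ≠ k → dom i k)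
    (hID : ∀ i j k, ind i j → dom j k → i ≠ k → dom i k)
    (hDI : ∀ i j k, dom i j → ind j k → i ≠ k → dom i k)
    (hII : ∀ i j k, ind i j → ind j k → i ≠ k → ind i k) {i j k : α}
    (hij : WeakPref dom ind i j) (hjk : WeakPref dom ind j k) : WeakPref dom ind i k := by
  rcases hij with rfl | hij
  · exact hjk
  rcases hjk with rfl | hjk
  · exact Or.inr hij
  by_cases hik : i = k
  · exact Or.inl hik
  right
  rcases hij with hij | hij <;> rcases hjk with hjk | hjk
  · exact Or.inl (hDD i j k hij hjk hik)
  · exact Or.inl (hDI i j k hij hjk hik)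
  · exact Or.inl (hID i j k hij hjk hik)
  · exact Or.inr (hII i j k hij hjk hik)

theorem weakPref_total (htri : ∀ i j, i ≠ j → dom i j ∨ dom j i ∨ ind i j) (i j : α) :
    WeakPref dom ind i j ∨ WeakPref dom ind j i := by
  by_cases hij : i = j
  · exact Or.inl (Or.inl hij)
  rcases htri i j hij with h | h | h
  · exact Or.inl (Or.inr (Or.inl h))
  · exact Or.inr (Or.inr (Or.inl h))
  · exact Or.inl (Or.inr (Or.inr h))

theorem weakPref_of_maximal (htri : ∀ i j, i ≠ j → dom i j ∨ dom j i ∨ ind i j) {i : α}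
    (hmax : ∀ k, WeakPref dom ind k i → WeakPref dom ind i k) (j : α) :
    WeakPref dom ind i j :=
  (weakPref_total htri i j).elim id (hmax j)

variable [Fintype α]

noncomputable def copelandScore (dom ind : α → α → Prop) (i : α) : ℝ :=
  ((univ.filter (fun k => dom i k)).card : ℝ)
    + (1 / 2) * ((univ.filter (fun k => ind i k)).card : ℝ)

theorem card_dom_add_card_ind_lt (hDD : ∀ i j k, dom i j → dom j k → i ≠ k → dom i k)
    (hDI : ∀ i j k, dom i j → ind j k → i ≠ k → dom i k)
    (hasymm : ∀ i j, dom i j → ¬ dom j i) (hdisj : ∀ i j, dom i j → ¬ ind i j)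
    (hsymm : ∀ i j, ind i j → ind j i) (hirr : ∀ i, ¬ ind i i) {i j : α} (hij : dom i j) :
    (univ.filter (fun k => dom j k)).card + (univ.filter (fun k => ind j k)).card
      < (univ.filter (fun k => dom i k)).card := by
  have hdisjoint : Disjoint (univ.filter (fun k => dom j k)) (univ.filter (fun k => ind j k)) :=
    disjoint_filter.mpr fun k _ => hdisj j k
  rw [← card_union_of_disjoint hdisjoint]
  refine card_lt_card (ssubset_iff_of_subset ?_ |>.mpr ⟨j, ?_, ?_⟩)
  · intro k hk
    simp only [mem_union, mem_filter, mem_univ, true_and] at hk ⊢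
    rcases hk with hk | hk
    · exact hDD i j k hij hk (by rintro rfl; exact hasymm j i hk hij)
    · exact hDI i j k hij hk (by rintro rfl; exact hdisj i j hij (hsymm j i hk))
  · simpa using hij
  · simpa using ⟨fun h => hasymm j j h h, hirr j⟩

theorem card_dom_le_of_ind (hID : ∀ i j k, ind i j → dom j k → i ≠ k → dom i k)
    (hdisj : ∀ i j, dom i j → ¬ ind i j) (hsymm : ∀ i j, ind i j → ind j i) {i j : α}
    (hij : ind i j) :
    (univ.filter (fun k => dom j k)).card ≤ (univ.filter (fun k => dom i k)).card := by
  refine card_le_card fun k hk => ?_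
  simp only [mem_filter, mem_univ, true_and] at hk ⊢
  exact hID i j k hij hk (by rintro rfl; exact hdisj j i hk (hsymm i j hij))

theorem card_ind_le_of_ind (hII : ∀ i j k, ind i j → ind j k → i ≠ k → ind i k)
    (hsymm : ∀ i j, ind i j → ind j i) (hirr : ∀ i, ¬ ind i i) {i j : α} (hij : ind i j) :
    (univ.filter (fun k => ind j k)).card ≤ (univ.filter (fun k => ind i k)).card := by
  have hsub : (univ.filter (fun k => ind j k)).erase i
      ⊆ (univ.filter (fun k => ind i k)).erase j := by
    intro k hk
    simp only [mem_erase, mem_filter, mem_univ, true_and] at hk ⊢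
    exact ⟨by rintro rfl; exact hirr k hk.2, hII i j k hij hk.2 (Ne.symm hk.1)⟩
  have hcard := card_le_card hsub
  rwa [card_erase_of_mem (by simpa using hsymm i j hij),
    card_erase_of_mem (by simpa using hij), Nat.sub_le_sub_iff_right] at hcard
  exact card_pos.mpr ⟨j, by simpa using hij⟩

theorem copelandScore_le_of_weakPref (hDD : ∀ i j k, dom i j → dom j k → i ≠ k → dom i k)
    (hID : ∀ i j k, ind i j → dom j k → i ≠ k → dom i k)
    (hDI : ∀ i j k, dom i j → ind j k → i ≠ k → dom i k)
    (hII : ∀ i j k, ind i j → ind j k → i ≠ k → ind i k)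
    (hasymm : ∀ i j, dom i j → ¬ dom j i) (hdisj : ∀ i j, dom i j → ¬ ind i j)
    (hsymm : ∀ i j, ind i j → ind j i) (hirr : ∀ i, ¬ ind i i) {i j : α}
    (hij : WeakPref dom ind i j) : copelandScore dom ind j ≤ copelandScore dom ind i := by
  unfold copelandScore
  rcases hij with rfl | hij | hij
  · exact le_rfl
  · have hlt : ((univ.filter (fun k => dom j k)).card : ℝ)
        + (univ.filter (fun k => ind j k)).card + 1 ≤ (univ.filter (fun k => dom i k)).card := by
      exact_mod_cast card_dom_add_card_ind_lt hDD hDI hasymm hdisj hsymm hirr hij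
    have : (0 : ℝ) ≤ (univ.filter (fun k => ind i k)).card := Nat.cast_nonneg _
    have : (0 : ℝ) ≤ (univ.filter (fun k => ind j k)).card := Nat.cast_nonneg _
    linarith
  · have hD : ((univ.filter (fun k => dom j k)).card : ℝ)
        ≤ (univ.filter (fun k => dom i k)).card := by
      exact_mod_cast card_dom_le_of_ind hID hdisj hsymm hij
    have hI : ((univ.filter (fun k => ind j k)).card : ℝ)
        ≤ (univ.filter (fun k => ind i k)).card := by
      exact_mod_cast card_ind_le_of_ind hII hsymm hirr hij
    linarith

end Relations

end DuelingBandits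

open DuelingBandits

open Classical Finset in
theorem transitive_indiff_total_preorder_general {n : ℕ}
    (Ps Pi Pp : Fin n → Fin n → ℝ)
    (hcons1 : ∀ i j, i ≠ j → Ps j i = Pp i j)
    (hcons2 : ∀ i j, i ≠ j → Pi j i = Pi i j)
    (hmode : ∀ i j, i ≠ j →
      (Ps i j > max (Pp i j) (Pi i j)) ∨ (Pi i j > max (Ps i j) (Pp i j)) ∨
        (Pp i j > max (Ps i j) (Pi i j)))
    (dom ind : Fin n → Fin n → Prop)
    (hdom : ∀ i j, dom i j ↔ i ≠ j ∧ Ps i j > max (Pp i j) (Pi i j))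
    (hind : ∀ i j, ind i j ↔ i ≠ j ∧ Pi i j > max (Ps i j) (Pp i j))
    -- the four transitivity conditions
    (h1 : ∀ i j k, dom i j → dom j k → i ≠ k → dom i k)
    (h2 : ∀ i j k, ind i j → dom j k → i ≠ k → dom i k)
    (h3 : ∀ i j k, dom i j → ind j k → i ≠ k → dom i k)
    (h4 : ∀ i j k, ind i j → ind j k → i ≠ k → ind i k)
    (CP : Fin n → ℝ)
    (hCP : ∀ i, CP i = ((univ.filter (fun k => dom i k)).card : ℝ)
        + (1 / 2) * ((univ.filter (fun k => ind i k)).card : ℝ))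
    (R : Fin n → Fin n → Prop)
    (hR : ∀ i j, R i j ↔ (i = j ∨ dom i j ∨ ind i j)) :
    (∀ i j k, R i j → R j k → R i k) ∧ (∀ i j, R i j ∨ R j i) ∧
      (∀ i : Fin n, (∀ k, R k i → R i k) → ∀ j, CP j ≤ CP i) := by
  have hsymm : ∀ i j, ind i j → ind j i := fun _ _ => ind_symm hcons1 hcons2 hind
  have hasymm : ∀ i j, dom i j → ¬ dom j i := fun _ _ => dom_asymm hcons1 hdom
  have hdisj : ∀ i j, dom i j → ¬ ind i j := fun _ _ => not_ind_of_dom hdom hind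
  have hirr : ∀ i, ¬ ind i i := fun i h => ((hind i i).mp h).1 rfl
  have htri : ∀ i j, i ≠ j → dom i j ∨ dom j i ∨ ind i j := fun _ _ =>
    dom_or_dom_or_ind hcons1 hcons2 hmode hdom hind
  obtain rfl : R = WeakPref dom ind := funext₂ fun i j => propext (hR i j)
  obtain rfl : CP = copelandScore dom ind := funext hCP
  refine ⟨fun i j k => weakPref_trans h1 h2 h3 h4, weakPref_total htri, ?_⟩
  intro i hmax j
  exact copelandScore_le_of_weakPref h1 h2 h3 h4 hasymm hdisj hsymm hirr
    (weakPref_of_maximal htri hmax j)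

open Classical Finset in
theorem transitive_indiff_total_preorder {n : ℕ} (hn : 2 ≤ n)
    (Ps Pi Pp : Fin n → Fin n → ℝ)
    (hrange : ∀ i j, 0 ≤ Ps i j ∧ 0 ≤ Pi i j ∧ 0 ≤ Pp i j)
    (hsum : ∀ i j, i ≠ j → Ps i j + Pi i j + Pp i j = 1)
    (hcons1 : ∀ i j, i ≠ j → Ps j i = Pp i j)
    (hcons2 : ∀ i j, i ≠ j → Pi j i = Pi i j)
    (hmode : ∀ i j, i ≠ j →
      (Ps i j > max (Pp i j) (Pi i j)) ∨ (Pi i j > max (Ps i j) (Pp i j)) ∨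
        (Pp i j > max (Ps i j) (Pi i j)))
    (dom ind : Fin n → Fin n → Prop)
    (hdom : ∀ i j, dom i j ↔ i ≠ j ∧ Ps i j > max (Pp i j) (Pi i j))
    (hind : ∀ i j, ind i j ↔ i ≠ j ∧ Pi i j > max (Ps i j) (Pp i j))
    -- the four transitivity conditions
    (h1 : ∀ i j k, dom i j → dom j k → i ≠ k → dom i k)
    (h2 : ∀ i j k, ind i j → dom j k → i ≠ k → dom i k)
    (h3 : ∀ i j k, dom i j → ind j k → i ≠ k → dom i k)
    (h4 : ∀ i j k, ind i j → ind j k → i ≠ k → ind i k)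
    (CP : Fin n → ℝ)
    (hCP : ∀ i, CP i = ((univ.filter (fun k => dom i k)).card : ℝ)
        + (1 / 2) * ((univ.filter (fun k => ind i k)).card : ℝ))
    (R : Fin n → Fin n → Prop)
    (hR : ∀ i j, R i j ↔ (i = j ∨ dom i j ∨ ind i j)) :
    (∀ i j k, R i j → R j k → R i k) ∧ (∀ i j, R i j ∨ R j i) ∧
      (∀ i : Fin n, (∀ k, R k i → R i k) → ∀ j, CP j ≤ CP i) :=
  transitive_indiff_total_preorder_general Ps Pi Pp hcons1 hcons2 hmode dom ind hdom hind h1 h2 h3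
    h4 CP hCP R hR
end

section
/- Let L, d be natural numbers with 1 ≤ d ≤ L. Then max over l ∈ {d−1,...,L−1} of C(L−1,l) / (C(L−1,l) + C(L−2,l−1)·[l ≥ 1]) equals (L−1)/(L+d−2) when d ≥ 2, and equals 1 when d = 1 (with the convention that the term C(L−2,l−1) is omitted for l = 0). -/
lemma ratio_eq_aux (L l : ℕ) (hL : 2 ≤ L) (hl1 : 1 ≤ l) (hlL : l ≤ L - 1) :
    (Nat.choose (L - 1) l : ℝ) /
      ((Nat.choose (L - 1) l : ℝ) + (Nat.choose (L - 2) (l - 1) : ℝ))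
      = ((L : ℝ) - 1) / ((L : ℝ) - 1 + l) := by
  have hc : 0 < Nat.choose (L - 1) l := Nat.choose_pos hlL
  have key : (L - 1) * Nat.choose (L - 2) (l - 1) = Nat.choose (L - 1) l * l := by
    have h := Nat.add_one_mul_choose_eq (L - 2) (l - 1)
    have h1 : L - 2 + 1 = L - 1 := by omega
    have h2 : l - 1 + 1 = l := by omega
    simpa [Nat.succ_eq_add_one, h1, h2] using h
  have keyR : ((L : ℝ) - 1) * (Nat.choose (L - 2) (l - 1) : ℝ)
      = (Nat.choose (L - 1) l : ℝ) * l := by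
    have := congrArg (Nat.cast : ℕ → ℝ) key
    rw [Nat.cast_mul, Nat.cast_mul, Nat.cast_sub (by omega : 1 ≤ L)] at this
    simpa using this
  have hcR : (0:ℝ) < (Nat.choose (L - 1) l : ℝ) := by exact_mod_cast hc
  have hbR : (0:ℝ) ≤ (Nat.choose (L - 2) (l - 1) : ℝ) := by positivity
  have hlR : (1:ℝ) ≤ (l:ℝ) := by exact_mod_cast hl1
  have hLR : (2:ℝ) ≤ (L:ℝ) := by exact_mod_cast hL
  rw [div_eq_div_iff (by linarith) (by linarith)]
  linear_combination -keyR

theorem max_ratio_Cpp (L d : ℕ) (hd : 1 ≤ d) (hdL : d ≤ L) :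
    (2 ≤ d → IsGreatest
      {x : ℝ | ∃ l : ℕ, d - 1 ≤ l ∧ l ≤ L - 1 ∧
        x = (Nat.choose (L - 1) l : ℝ) /
          ((Nat.choose (L - 1) l : ℝ) + (if 1 ≤ l then (Nat.choose (L - 2) (l - 1) : ℝ) else 0))}
      (((L : ℝ) - 1) / ((L : ℝ) + (d : ℝ) - 2))) ∧
    (d = 1 → IsGreatest
      {x : ℝ | ∃ l : ℕ, d - 1 ≤ l ∧ l ≤ L - 1 ∧
        x = (Nat.choose (L - 1) l : ℝ) /
          ((Nat.choose (L - 1) l : ℝ) + (if 1 ≤ l then (Nat.choose (L - 2) (l - 1) : ℝ) else 0))}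
      1) := by
  constructor
  · intro h2
    have hL : 2 ≤ L := le_trans h2 hdL
    constructor
    · refine ⟨d - 1, le_refl _, by omega, ?_⟩
      rw [if_pos (by omega : 1 ≤ d - 1),
        ratio_eq_aux L (d - 1) hL (by omega) (by omega)]
      have : ((d - 1 : ℕ) : ℝ) = (d : ℝ) - 1 := by
        rw [Nat.cast_sub (by omega : 1 ≤ d)]; simp
      rw [this]; ring_nf
    · rintro x ⟨l, hdl, hlL, rfl⟩
      have hl1 : 1 ≤ l := by omega
      rw [if_pos hl1, ratio_eq_aux L l hL hl1 hlL]
      have hdlR : ((d : ℝ) - 1) ≤ (l : ℝ) := by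
        have : ((d - 1 : ℕ) : ℝ) ≤ (l : ℝ) := by exact_mod_cast hdl
        rw [Nat.cast_sub (by omega : 1 ≤ d)] at this; simpa using this
      have hLR : (2:ℝ) ≤ (L:ℝ) := by exact_mod_cast hL
      have hdR : (2:ℝ) ≤ (d:ℝ) := by exact_mod_cast h2
      apply div_le_div_of_nonneg_left (by linarith) (by linarith) (by linarith)
  · intro h1
    constructor
    · refine ⟨0, by omega, by omega, ?_⟩
      rw [if_neg (by omega)]
      simp
    · rintro x ⟨l, hdl, hlL, rfl⟩
      have hc : 0 < Nat.choose (L - 1) l := Nat.choose_pos hlL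
      have hcR : (0:ℝ) < (Nat.choose (L - 1) l : ℝ) := by exact_mod_cast hc
      have hbR : (0:ℝ) ≤ (if 1 ≤ l then (Nat.choose (L - 2) (l - 1) : ℝ) else 0) := by
        split <;> positivity
      rw [div_le_one (by linarith)]
      linarith
end
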